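/- For all 1 ≤ l ≤ k ≤ m, B_{l,k} admits the telescoping decomposition B_{l,k} = A_{l,1} + Σ_{p=l}^{k-1} ( A_{p+1,p+1} − A_{p,p+1} ). In particular, the RaFM model satisfies B_{1,m} = A_{1,1} + Σ_{p=1}^{m-1} ( A_{p+1,p+1} − A_{p,p+1} ). -/

import Mathlib

open Finset

/-- `F_k = {i ∈ F : k_i ≥ k}`. -/
def featSet (F : Finset ℕ) (kk : ℕ → ℕ) (k : ℕ) : Finset ℕ :=
  F.filter (fun i => k ≤ kk i)

/-- `A_{l,k} = Σ_{i,j∈F_k, i<j} ⟨v_i^{(l)}, v_j^{(l)}⟩ x_i x_j`. -/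
noncomputable def Asum (F : Finset ℕ) (x : ℕ → ℝ) (kk : ℕ → ℕ) (D : ℕ → ℕ)
    (v : (k : ℕ) → ℕ → Fin (D k) → ℝ) (l k : ℕ) : ℝ :=
  ∑ i ∈ featSet F kk k, ∑ j ∈ (featSet F kk k).filter (fun j => i < j),
    (∑ f, v l i f * v l j f) * x i * x j

/-- `B_{l,k} = Σ_{i,j∈F, i<j} ⟨v_i^{(c_{ij})}, v_j^{(c_{ij})}⟩ x_i x_j` with
`c_{ij} = max(l, min(k, min(k_i, k_j)))`. -/
noncomputable def Bsum (F : Finset ℕ) (x : ℕ → ℝ) (kk : ℕ → ℕ) (D : ℕ → ℕ)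
    (v : (k : ℕ) → ℕ → Fin (D k) → ℝ) (l k : ℕ) : ℝ :=
  ∑ i ∈ F, ∑ j ∈ F.filter (fun j => i < j),
    (∑ f, v (max l (min k (min (kk i) (kk j)))) i f *
          v (max l (min k (min (kk i) (kk j)))) j f) * x i * x j

/-!
Each pair `i < j` with `t = min (k_i, k_j)` contributes to `B_{l,k}` at level
`max (l, min (k, t))`. Raising `k` to `k + 1` moves that level from `k` to `k + 1` exactly
for the pairs with `k + 1 ≤ t`, i.e. the pairs inside `F_{k+1}`, so
`B_{l,k+1} - B_{l,k} = A_{k+1,k+1} - A_{k,k+1}`; the sum telescopes down to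
`B_{l,l} = A_{l,1}`, since every pair lies in `F_1`.
-/

lemma apply_max_min_succ {R : Type*} [AddCommGroup R] (g : ℕ → R) {l k : ℕ} (hlk : l ≤ k)
    (t : ℕ) :
    g (max l (min (k + 1) t)) - g (max l (min k t))
      = if k + 1 ≤ t then g (k + 1) - g k else 0 := by
  split_ifs with ht
  · rw [min_eq_left ht, min_eq_left (by omega), max_eq_right (by omega), max_eq_right hlk]
  · rw [min_eq_right (by omega : t ≤ k + 1), min_eq_right (by omega : t ≤ k), sub_self]

section

variable (F : Finset ℕ) (x : ℕ → ℝ) (kk : ℕ → ℕ) (D : ℕ → ℕ)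
  (v : (k : ℕ) → ℕ → Fin (D k) → ℝ)

lemma Asum_eq_sum_ite (l k : ℕ) :
    Asum F x kk D v l k
      = ∑ i ∈ F, ∑ j ∈ F.filter (fun j => i < j),
          if k ≤ min (kk i) (kk j) then (∑ f, v l i f * v l j f) * x i * x j else 0 := by
  simp only [Asum, featSet, sum_filter, le_min_iff]
  refine sum_congr rfl fun i _ => ?_
  split_ifs with hi
  · exact sum_congr rfl fun j _ => by split_ifs <;> simp_all
  · simp [hi]

lemma Bsum_self (hk : ∀ i ∈ F, 1 ≤ kk i) (l : ℕ) :
    Bsum F x kk D v l l = Asum F x kk D v l 1 := by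
  rw [Asum_eq_sum_ite]
  refine sum_congr rfl fun i hi => sum_congr rfl fun j hj => ?_
  have hij : 1 ≤ min (kk i) (kk j) := le_min (hk i hi) (hk j (mem_filter.1 hj).1)
  rw [if_pos hij, max_eq_left (min_le_left _ _)]

lemma Bsum_succ_sub {l k : ℕ} (hlk : l ≤ k) :
    Bsum F x kk D v l (k + 1) - Bsum F x kk D v l k
      = Asum F x kk D v (k + 1) (k + 1) - Asum F x kk D v k (k + 1) := by
  simp only [Bsum, Asum_eq_sum_ite, ← sum_sub_distrib]
  refine sum_congr rfl fun i _ => sum_congr rfl fun j _ => ?_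
  rw [apply_max_min_succ (fun c => (∑ f, v c i f * v c j f) * x i * x j) hlk, ite_sub_ite,
    sub_self]

lemma Bsum_eq_Asum_add_sum_Ico (hk : ∀ i ∈ F, 1 ≤ kk i) {l k : ℕ} (hlk : l ≤ k) :
    Bsum F x kk D v l k
      = Asum F x kk D v l 1
        + ∑ p ∈ Ico l k, (Asum F x kk D v (p + 1) (p + 1) - Asum F x kk D v p (p + 1)) := by
  rw [← Bsum_self F x kk D v hk, sum_congr rfl fun p hp => (Bsum_succ_sub F x kk D v
    (mem_Ico.1 hp).1).symm, sum_Ico_sub (fun p => Bsum F x kk D v l p) hlk]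
  abel

end

theorem Bsum_telescoping_general
    (F : Finset ℕ) (m : ℕ) (hm : 1 ≤ m) (x : ℕ → ℝ) (kk : ℕ → ℕ)
    (hk : ∀ i ∈ F, 1 ≤ kk i ∧ kk i ≤ m)
    (D : ℕ → ℕ)
    (v : (k : ℕ) → ℕ → Fin (D k) → ℝ) :
    (∀ l k, 1 ≤ l → l ≤ k → k ≤ m →
        Bsum F x kk D v l k
          = Asum F x kk D v l 1
            + ∑ p ∈ Finset.Ico l k,
                (Asum F x kk D v (p + 1) (p + 1) - Asum F x kk D v p (p + 1))) ∧
      Bsum F x kk D v 1 m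
        = Asum F x kk D v 1 1
          + ∑ p ∈ Finset.Ico 1 m,
              (Asum F x kk D v (p + 1) (p + 1) - Asum F x kk D v p (p + 1)) := by
  have hk₁ : ∀ i ∈ F, 1 ≤ kk i := fun i hi => (hk i hi).1
  exact ⟨fun _ _ _ hlk _ => Bsum_eq_Asum_add_sum_Ico F x kk D v hk₁ hlk,
    Bsum_eq_Asum_add_sum_Ico F x kk D v hk₁ hm⟩

/-- For `1 ≤ l ≤ k ≤ m`:
`B_{l,k} = A_{l,1} + Σ_{p=l}^{k-1} (A_{p+1,p+1} − A_{p,p+1})`; in particular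
`B_{1,m} = A_{1,1} + Σ_{p=1}^{m-1} (A_{p+1,p+1} − A_{p,p+1})`. -/
theorem Bsum_telescoping
    (F : Finset ℕ) (m : ℕ) (hm : 1 ≤ m) (x : ℕ → ℝ) (kk : ℕ → ℕ)
    (hk : ∀ i ∈ F, 1 ≤ kk i ∧ kk i ≤ m)
    (D : ℕ → ℕ) (hD : ∀ a b, 1 ≤ a → a ≤ b → b ≤ m → D a ≤ D b)
    (v : (k : ℕ) → ℕ → Fin (D k) → ℝ) :
    (∀ l k, 1 ≤ l → l ≤ k → k ≤ m →
        Bsum F x kk D v l k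
          = Asum F x kk D v l 1
            + ∑ p ∈ Finset.Ico l k,
                (Asum F x kk D v (p + 1) (p + 1) - Asum F x kk D v p (p + 1))) ∧
      Bsum F x kk D v 1 m
        = Asum F x kk D v 1 1
          + ∑ p ∈ Finset.Ico 1 m,
              (Asum F x kk D v (p + 1) (p + 1) - Asum F x kk D v p (p + 1)) :=
  Bsum_telescoping_general F m hm x kk hk D v
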